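/- Let X_1, …, X_n be pointed CW-complexes. The inclusion J : X_1 × ⋯ × X_n → ⋃_{i=1}^n X_1 × ⋯ × CX_i × ⋯ × X_n (where CX_i is the cone on X_i) is null homotopic. -/

import Mathlib

/-! The coordinates of `X₁ × ⋯ × Xₙ` can each be contracted inside their own cones, but the
target only allows one coordinate at a time to leave the base. So the coordinates are moved to
their basepoints one after another: the `k`-th travels from `xₖ` up to the apex of `CXₖ` and
back down to `ptₖ`, while all other coordinates stay in the base. -/

noncomputable section

open ContinuousMap

/-! ### Basic point-set constructions -/

/-- The quotient of `X` collapsing the subset `S` to a single point. -/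
abbrev Collapse {X : Type*} [TopologicalSpace X] (S : Set X) : Type _ :=
  Quot (fun a b : X => a ∈ S ∧ b ∈ S)

namespace Collapse

variable {X Y : Type*} [TopologicalSpace X] [TopologicalSpace Y]

/-- The quotient map. -/
def mk (S : Set X) (x : X) : Collapse S := Quot.mk _ x

lemma continuous_mk {S : Set X} : Continuous (mk S) := continuous_quot_mk

/-- The quotient map as a continuous map. -/
def mkCM (S : Set X) : C(X, Collapse S) := ⟨mk S, continuous_mk⟩

/-- A continuous map sending `S` into `T` descends to the collapsed spaces. -/
def desc {S : Set X} {T : Set Y} (f : C(X, Y)) (h : Set.MapsTo f S T) :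
    C(Collapse S, Collapse T) :=
  ⟨Quot.lift (fun x => mk T (f x)) (fun a b hab => Quot.sound ⟨h hab.1, h hab.2⟩),
    continuous_quot_lift _ (continuous_mk.comp f.continuous)⟩

end Collapse

/-- The (unreduced) cone on a space: `CX = (X × I)/(X × {1})`, containing `X`
as the subspace `X × {0}`. -/
abbrev Cone (X : Type*) [TopologicalSpace X] : Type _ :=
  Collapse {p : X × unitInterval | p.2 = 1}

/-- The canonical inclusion of the base `X` into the cone `CX`. -/
def Cone.incl {X : Type*} [TopologicalSpace X] : C(X, Cone X) :=
  ⟨fun x => Collapse.mk _ (x, 0),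
    Collapse.continuous_mk.comp (continuous_id.prodMk continuous_const)⟩

/-- The join `A ∗ B = A × I × B / ∼`, where `(a, 0, b) ∼ (a, 0, b')` and
`(a, 1, b) ∼ (a', 1, b)`. -/
abbrev Join (A B : Type*) [TopologicalSpace A] [TopologicalSpace B] : Type _ :=
  Quot (fun p q : A × unitInterval × B =>
    (p.2.1 = 0 ∧ q.2.1 = 0 ∧ p.1 = q.1) ∨ (p.2.1 = 1 ∧ q.2.1 = 1 ∧ p.2.2 = q.2.2))

/-- Points of the join. -/
def Join.mk {A B : Type*} [TopologicalSpace A] [TopologicalSpace B]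
    (a : A) (t : unitInterval) (b : B) : Join A B :=
  Quot.mk _ (a, t, b)

/-- The join of a finite family of spaces: formal convex combinations
`t₁ x₁ + ⋯ + tₙ xₙ`, where the coordinate `xᵢ` is irrelevant when `tᵢ = 0`. -/
abbrev JoinFamily {ι : Type*} [Fintype ι] (Y : ι → Type*) [∀ i, TopologicalSpace (Y i)] :
    Type _ :=
  Quot (fun p q : (∀ i, Y i) × (stdSimplex ℝ ι) =>
    p.2 = q.2 ∧ ∀ i, (p.2 : ι → ℝ) i ≠ 0 → p.1 i = q.1 i)

/-- Points of the join of a family. -/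
def JoinFamily.mk {ι : Type*} [Fintype ι] {Y : ι → Type*} [∀ i, TopologicalSpace (Y i)]
    (y : ∀ i, Y i) (t : stdSimplex ℝ ι) : JoinFamily Y :=
  Quot.mk _ (y, t)

/-- The vertex of the standard simplex corresponding to `i₀`. -/
def stdSimplexVertex {ι : Type*} [Fintype ι] [DecidableEq ι] (i₀ : ι) : stdSimplex ℝ ι :=
  ⟨fun j => if j = i₀ then 1 else 0,
    fun j => by dsimp only; split <;> norm_num, by simp⟩

/-- The smash product `A ∧ B = (A × B)/(A ∨ B)`. -/
abbrev Smash (A B : Type*) [TopologicalSpace A] [TopologicalSpace B] (a₀ : A) (b₀ : B) :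
    Type _ :=
  Collapse {p : A × B | p.1 = a₀ ∨ p.2 = b₀}

/-- The right half-smash `A ⋊ B = (A × B)/(∗ × B)`. -/
abbrev RHalfSmash (A B : Type*) [TopologicalSpace A] [TopologicalSpace B] (a₀ : A) : Type _ :=
  Collapse {p : A × B | p.1 = a₀}

/-- The left half-smash `A ⋉ B = (A × B)/(A × ∗)`. -/
abbrev LHalfSmash (A B : Type*) [TopologicalSpace A] [TopologicalSpace B] (b₀ : B) : Type _ :=
  Collapse {p : A × B | p.2 = b₀}

/-- The reduced suspension `ΣA = (A × I)/(A × {0} ∪ A × {1} ∪ {a₀} × I)`. -/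
abbrev Susp (A : Type*) [TopologicalSpace A] (a₀ : A) : Type _ :=
  Collapse {p : A × unitInterval | p.1 = a₀ ∨ p.2 = 0 ∨ p.2 = 1}

/-- The basepoint of the reduced suspension. -/
def Susp.pt (A : Type*) [TopologicalSpace A] (a₀ : A) : Susp A a₀ :=
  Collapse.mk _ (a₀, 0)

/-- The map `Σf` induced on reduced suspensions by a pointed map `f`. -/
def Susp.map {A B : Type*} [TopologicalSpace A] [TopologicalSpace B] {a₀ : A} {b₀ : B}
    (f : C(A, B)) (hf : f a₀ = b₀) : C(Susp A a₀, Susp B b₀) :=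
  Collapse.desc ⟨fun p => (f p.1, p.2), (f.continuous.comp continuous_fst).prodMk continuous_snd⟩
    (fun p hp => by
      rcases hp with h | h
      · exact Or.inl (by simp [h, hf])
      · exact Or.inr h)

/-- The `m`-fold reduced suspension
`Σ^m A = (A × I^m)/(A × ∂(I^m) ∪ {a₀} × I^m)`. -/
abbrev iSusp (m : ℕ) (A : Type*) [TopologicalSpace A] (a₀ : A) : Type _ :=
  Collapse {p : A × (Fin m → unitInterval) | p.1 = a₀ ∨ ∃ j, p.2 j = 0 ∨ p.2 j = 1}

/-- The smash product of a finite family of pointed spaces: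
`⋀ᵢ Yᵢ = (∏ᵢ Yᵢ)/(fat wedge)`. -/
abbrev bigSmash {ι : Type*} (Y : ι → Type*) [∀ i, TopologicalSpace (Y i)]
    (pt : ∀ i, Y i) : Type _ :=
  Collapse {f : ∀ i, Y i | ∃ i, f i = pt i}

/-- The wedge sum `A ∨ B`. -/
abbrev Wedge (A B : Type*) [TopologicalSpace A] [TopologicalSpace B] (a₀ : A) (b₀ : B) :
    Type _ :=
  Collapse {x : A ⊕ B | x = Sum.inl a₀ ∨ x = Sum.inr b₀}

/-- The wedge of a family of spaces, each with a designated basepoint set `S i`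
(each `S i` should be a single point of `Y i`, possibly presented as a subset);
an extra disjoint point is wedged on so that the empty wedge is a point. -/
abbrev BigWedge {ι : Type*} (Y : ι → Type*) [∀ i, TopologicalSpace (Y i)]
    (S : ∀ i, Set (Y i)) : Type _ :=
  Collapse {p : (Σ i, Y i) ⊕ Unit |
    Sum.elim (fun q : Σ i, Y i => q.2 ∈ S q.1) (fun _ => True) p}

/-- The double mapping cylinder (homotopy pushout) of `f : X → Y` and `g : X → Z`. -/
abbrev DblCyl {X Y Z : Type*} [TopologicalSpace X] [TopologicalSpace Y] [TopologicalSpace Z]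
    (f : C(X, Y)) (g : C(X, Z)) : Type _ :=
  Quot (fun a b : Y ⊕ (X × unitInterval) ⊕ Z =>
    (∃ x, a = Sum.inl (f x) ∧ b = Sum.inr (Sum.inl (x, 0))) ∨
    (∃ x, a = Sum.inr (Sum.inr (g x)) ∧ b = Sum.inr (Sum.inl (x, 1))))

/-- The homotopy cofibre (mapping cone) of `f : X → Y`. -/
abbrev hCofiber {X Y : Type*} [TopologicalSpace X] [TopologicalSpace Y] (f : C(X, Y)) :
    Type _ :=
  DblCyl f (ContinuousMap.const X PUnit.unit)

/-- The basepoint (cone point) of the homotopy cofibre. -/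
def hCofiber.pt {X Y : Type*} [TopologicalSpace X] [TopologicalSpace Y] (f : C(X, Y)) :
    hCofiber f :=
  Quot.mk _ (Sum.inr (Sum.inr PUnit.unit))

/-! ### Simplicial complexes and polyhedral products -/

/-- An (abstract) simplicial complex on the vertex set `ι`, allowing ghost vertices:
a downward closed collection of finite subsets of `ι` containing the empty face. -/
def IsSimplicialComplex {ι : Type*} (K : Set (Finset ι)) : Prop :=
  ∅ ∈ K ∧ ∀ σ ∈ K, ∀ τ ⊆ σ, τ ∈ K

/-- `K` is shifted with respect to the order `r` on the vertices. -/
def ShiftedWrt {ι : Type*} [DecidableEq ι] (K : Set (Finset ι)) (r : ι → ι → Prop) : Prop :=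
  ∀ σ ∈ K, ∀ ν ∈ σ, ∀ ν', r ν' ν → insert ν' (σ.erase ν) ∈ K

/-- `K` is shifted: there is an ordering of the vertices for which whenever `σ ∈ K`,
`ν ∈ σ` and `ν' < ν`, also `(σ - ν) ∪ ν' ∈ K`. -/
def IsShifted {n : ℕ} (K : Set (Finset (Fin n))) : Prop :=
  ∃ e : Fin n ≃ Fin n, ShiftedWrt K (fun a b => e a < e b)

/-- For `σ ⊆ ι` and pairs `(Xᵢ, Aᵢ)`, the block `(X, A)^σ = ∏ Yᵢ` with `Yᵢ = Xᵢ` if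
`i ∈ σ` and `Yᵢ = Aᵢ` otherwise, as a subset of `∏ᵢ Xᵢ`. -/
def polyPiece {ι : Type*} (σ : Finset ι) {X : ι → Type*} (A : ∀ i, Set (X i)) :
    Set (∀ i, X i) :=
  {f | ∀ i, i ∉ σ → f i ∈ A i}

/-- The polyhedral product `(X, A)^K = ⋃_{σ ∈ K} (X, A)^σ` of the pairs `(Xᵢ, Aᵢ)`,
as a subset of `∏ᵢ Xᵢ`. -/
def polyProdXA {ι : Type*} (K : Set (Finset ι)) {X : ι → Type*} (A : ∀ i, Set (X i)) :
    Set (∀ i, X i) :=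
  {f | ∃ σ ∈ K, ∀ i, i ∉ σ → f i ∈ A i}

/-- The polyhedral product `(CX, X)^K` of the pairs `(CXᵢ, Xᵢ)`, as a subset
of `∏ᵢ CXᵢ`. -/
def polyProd {ι : Type*} (K : Set (Finset ι)) (X : ι → Type*)
    [∀ i, TopologicalSpace (X i)] : Set (∀ i, Cone (X i)) :=
  polyProdXA K (fun i => Set.range (Cone.incl (X := X i)))

/-- The canonical basepoint of `(CX, X)^K` (all coordinates at the basepoints,
included in the cones); it lies in the polyhedral product as soon as `∅ ∈ K`. -/
def polyProd.pt {ι : Type*} {K : Set (Finset ι)} {X : ι → Type*}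
    [∀ i, TopologicalSpace (X i)] (pt : ∀ i, X i) (h : ∅ ∈ K) : ↥(polyProd K X) :=
  ⟨fun i => Cone.incl (pt i), ⟨∅, h, fun i _ => ⟨pt i, rfl⟩⟩⟩

/-- The geometric realization of a simplicial complex `K` on the (finite) vertex set `ι`:
convex weightings of the vertices whose support is a face of `K`. -/
def geomReal {ι : Type*} [Fintype ι] (K : Set (Finset ι)) : Set (ι → ℝ) :=
  {w | (∀ v, 0 ≤ w v) ∧ (∑ v, w v = 1) ∧ ∃ σ ∈ K, {v | w v ≠ 0} = (σ : Set ι)}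

/-- `X` is (homeomorphic to the geometric realization of) a CW-complex. -/
def IsCWComplex (X : Type u) [TopologicalSpace X] : Prop :=
  Nonempty (TopCat.CWComplex (TopCat.of X))

lemma polyProd_mono {ι : Type*} {K₁ K₂ : Set (Finset ι)} (h : K₁ ⊆ K₂)
    {X : ι → Type*} [∀ i, TopologicalSpace (X i)] :
    polyProd K₁ X ⊆ polyProd K₂ X :=
  fun _ ⟨τ, hτ, hf⟩ => ⟨τ, h hτ, hf⟩

/-- A membership criterion for `(CX, X)^K`: a point whose coordinates in `σ` come from a
point of `(CX, X)^{∂σ}` and whose coordinates outside of `σ` lie in `Xᵢ ⊆ CXᵢ` belongs to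
`(CX, X)^K`, provided every proper face of `σ` belongs to `K`. -/
lemma mem_polyProd_of_boundary {ι : Type*}
    {K : Set (Finset ι)} {σ : Finset ι} (hσ : ∀ τ, τ ⊂ σ → τ ∈ K)
    {X : ι → Type*} [∀ i, TopologicalSpace (X i)]
    (c : ↥(polyProd {τ : Finset ↥σ | τ ≠ Finset.univ} (fun i : ↥σ => X i)))
    (f : ∀ i, Cone (X i))
    (hf₁ : ∀ i (h : i ∈ σ), f i = c.1 ⟨i, h⟩)
    (hf₂ : ∀ i, i ∉ σ → f i ∈ Set.range (Cone.incl (X := X i))) :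
    f ∈ polyProd K X := by
  obtain ⟨τ, hτ, hc⟩ := c.2
  refine ⟨τ.map (Function.Embedding.subtype _), ?_, ?_⟩
  · refine hσ _ (lt_of_le_of_ne ?_ ?_)
    · intro i hi
      simp only [Finset.mem_map, Function.Embedding.coe_subtype] at hi
      obtain ⟨a, _, rfl⟩ := hi
      exact a.2
    · intro hρσ
      apply hτ
      refine Finset.eq_univ_iff_forall.mpr (fun a => ?_)
      have ha : (a : ι) ∈ τ.map (Function.Embedding.subtype _) := by
        rw [hρσ]; exact a.2
      simp only [Finset.mem_map, Function.Embedding.coe_subtype] at ha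
      obtain ⟨b, hb, hba⟩ := ha
      exact (Subtype.ext hba) ▸ hb
  · intro i hi
    by_cases h : i ∈ σ
    · rw [hf₁ i h]
      refine hc ⟨i, h⟩ (fun hmem => hi ?_)
      exact Finset.mem_map.mpr ⟨⟨i, h⟩, hmem, rfl⟩
    · exact hf₂ i h

/-- The canonical map `(CX, X)^{∂σ} × ∏_{i ∉ σ} Xᵢ ⟶ (CX, X)^K`, available whenever every
proper face of `σ` is a face of `K`. -/
def boundarySmashMap {ι : Type*} [DecidableEq ι] {K : Set (Finset ι)} {σ : Finset ι}
    (hσ : ∀ τ, τ ⊂ σ → τ ∈ K)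
    (X : ι → Type*) [∀ i, TopologicalSpace (X i)] :
    C(↥(polyProd {τ : Finset ↥σ | τ ≠ Finset.univ} (fun i : ↥σ => X i)) ×
        (∀ j : {j : ι // j ∉ σ}, X j),
      ↥(polyProd K X)) :=
  ⟨fun p => ⟨fun i => if h : i ∈ σ then p.1.1 ⟨i, h⟩ else Cone.incl (p.2 ⟨i, h⟩),
      mem_polyProd_of_boundary hσ p.1 _ (fun i h => dif_pos h)
        (fun i h => by rw [dif_neg h]; exact ⟨p.2 ⟨i, h⟩, rfl⟩)⟩,
    by
      apply Continuous.subtype_mk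
      apply continuous_pi
      intro i
      by_cases h : i ∈ σ
      · simp only [dif_pos h]
        exact (continuous_apply _).comp (continuous_subtype_val.comp continuous_fst)
      · simp only [dif_neg h]
        exact Cone.incl.continuous.comp ((continuous_apply _).comp continuous_snd)⟩

namespace Cone

variable {X : Type*} [TopologicalSpace X]

lemma incl_homotopic_const_apex (x₀ : X) :
    (incl : C(X, Cone X)).Homotopic (const X (Collapse.mk _ (x₀, 1))) :=
  ⟨{ toFun := fun p => Collapse.mk _ (p.2, p.1)
     continuous_toFun := Collapse.continuous_mk.comp (continuous_snd.prodMk continuous_fst)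
     map_zero_left := fun _ => rfl
     map_one_left := fun _ => Quot.sound ⟨rfl, rfl⟩ }⟩

lemma incl_homotopic_const (x₀ : X) : (incl : C(X, Cone X)).Homotopic (const X (incl x₀)) := by
  have toApex := incl_homotopic_const_apex x₀
  have fromApex := toApex.comp (Homotopic.refl (const X x₀))
  rw [comp_const, comp_const, const_apply] at fromApex
  exact toApex.trans fromApex.symm

end Cone

namespace polyProd

variable {ι : Type*} {K : Set (Finset ι)} {X : ι → Type*} [∀ i, TopologicalSpace (X i)]

lemma cone_incl_mem (hempty : ∅ ∈ K) (x : ∀ i, X i) :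
    (fun i => Cone.incl (x i)) ∈ polyProd K X :=
  ⟨∅, hempty, fun i _ => ⟨x i, rfl⟩⟩

lemma update_cone_incl_mem [DecidableEq ι] {k : ι} (hk : {k} ∈ K) (x : ∀ i, X i)
    (c : Cone (X k)) : Function.update (fun i => Cone.incl (x i)) k c ∈ polyProd K X :=
  ⟨{k}, hk, fun i hi => ⟨x i, by rw [Function.update_of_ne (by simpa using hi)]⟩⟩

def baseIncl (hempty : ∅ ∈ K) : C((∀ i, X i), polyProd K X) :=
  ⟨fun x => ⟨fun i => Cone.incl (x i), cone_incl_mem hempty x⟩,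
    (continuous_pi fun i => Cone.incl.continuous.comp (continuous_apply i)).subtype_mk _⟩

def updateCone [DecidableEq ι] {k : ι} (hk : {k} ∈ K) :
    C(Cone (X k) × (∀ i, X i), polyProd K X) :=
  ⟨fun p => ⟨Function.update (fun i => Cone.incl (p.2 i)) k p.1,
      update_cone_incl_mem hk p.2 p.1⟩,
    ((continuous_pi fun i => Cone.incl.continuous.comp
      ((continuous_apply i).comp continuous_snd)).update k continuous_fst).subtype_mk _⟩

lemma baseIncl_comp_homotopic_update [DecidableEq ι] {Z : Type*} [TopologicalSpace Z]
    (hempty : ∅ ∈ K) {k : ι} (hk : {k} ∈ K) (f : C(Z, ∀ i, X i)) (x₀ : X k) :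
    ((baseIncl hempty).comp f).Homotopic
      ((baseIncl hempty).comp ⟨fun z => Function.update (f z) k x₀,
        f.continuous.update k continuous_const⟩) := by
  have hsource : (baseIncl hempty).comp f =
      (updateCone hk).comp ((Cone.incl.comp ((eval k).comp f)).prodMk f) := by
    ext z : 2
    exact (Function.update_eq_self k _).symm
  have htarget : (baseIncl hempty).comp ⟨fun z => Function.update (f z) k x₀,
        f.continuous.update k continuous_const⟩ =
      (updateCone hk).comp ((const Z (Cone.incl x₀)).prodMk f) := by
    ext z i
    exact Function.apply_update (fun i => Cone.incl (X := X i)) (f z) k x₀ i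
  rw [hsource, htarget]
  exact (Homotopic.refl _).comp
    (((Cone.incl_homotopic_const x₀).comp (Homotopic.refl _)).prodMk (Homotopic.refl f))

lemma baseIncl_homotopic_comp_piecewise [DecidableEq ι] (hempty : ∅ ∈ K)
    (hsingleton : ∀ k, {k} ∈ K) (pt : ∀ i, X i) (s : Finset ι) :
    (baseIncl hempty).Homotopic ((baseIncl hempty).comp
      ⟨fun x => s.piecewise pt x,
        continuous_pi fun i => continuous_const.if_const _ (continuous_apply i)⟩) := by
  induction s using Finset.induction_on with
  | empty =>
    simp only [Finset.piecewise_empty]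
    exact Homotopic.refl _
  | insert k s _ ih =>
    refine ih.trans ?_
    simp only [Finset.piecewise_insert]
    exact baseIncl_comp_homotopic_update hempty (hsingleton k) _ (pt k)

theorem baseIncl_nullhomotopic [Fintype ι] [DecidableEq ι] (pt : ∀ i, X i)
    (hempty : ∅ ∈ K) (hsingleton : ∀ k, {k} ∈ K) :
    (baseIncl (X := X) hempty).Nullhomotopic :=
  ⟨baseIncl hempty pt, by
    have h := baseIncl_homotopic_comp_piecewise hempty hsingleton pt Finset.univ
    simp only [Finset.piecewise_univ] at h
    exact h⟩

end polyProd

/-- Lemma 3.3. The inclusion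
`J : X₁ × ⋯ × Xₙ → ⋃ᵢ X₁ × ⋯ × CXᵢ × ⋯ × Xₙ` (the target being the polyhedral product
of the complex of all faces of cardinality at most one) is null homotopic. -/
theorem inclusion_fatVertexUnion_nullhomotopic {n : ℕ}
    (X : Fin n → Type) [∀ i, TopologicalSpace (X i)]
    (pt : ∀ i, X i) :
    ContinuousMap.Nullhomotopic
      (⟨fun f => ⟨fun i => Cone.incl (f i), ⟨∅, by simp, fun i _ => ⟨f i, rfl⟩⟩⟩,
          Continuous.subtype_mk
            (continuous_pi fun i => Cone.incl.continuous.comp (continuous_apply i)) _⟩ :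
        C((∀ i, X i), ↥(polyProd {σ : Finset (Fin n) | σ.card ≤ 1} X))) :=
  polyProd.baseIncl_nullhomotopic pt (by simp) (fun k => by simp)
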